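/- arXiv:1006.4937 — 6 statements merged into one kernel-verified Lean document; each statement's English description precedes it below -/
import Mathlib

section
/- The distributed greedy algorithm terminates in finite time: there exists a round t with t ≤ |L| such that O_{t+1} ∪ H_{t+1} = ∅, i.e., after at most |L| rounds no link is OPEN or CHECK. -/
open Classical

/-- Link distance `d(l_u,l_v)`: minimum graph distance between endpoints of the two links. -/
noncomputable def linkDist {V : Type*} (G : SimpleGraph V) (lu lv : V × V) : ℕ :=
  min (min (G.dist lu.1 lv.1) (G.dist lu.1 lv.2))
      (min (G.dist lu.2 lv.1) (G.dist lu.2 lv.2))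

/-- A wireless network: a connected simple graph `G` on the node set `V`, a finite set `L`
of directed links between adjacent nodes, an interference parameter `K ≥ 1`, and
pairwise distinct link prices `lam`. -/
structure Net (V : Type*) where
  G : SimpleGraph V
  conn : G.Connected
  L : Set (V × V)
  Lfin : L.Finite
  adj : ∀ l ∈ L, G.Adj l.1 l.2
  K : ℕ
  hK : 1 ≤ K
  lam : V × V → ℝ
  distinct : ∀ l ∈ L, ∀ l' ∈ L, l ≠ l' → lam l ≠ lam l'

/-- `W` is a `K`-valid matching: distinct links of `W` are at link distance `≥ K`. -/
def KValid {V : Type*} (N : Net V) (W : Set (V × V)) : Prop :=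
  ∀ l ∈ W, ∀ l' ∈ W, l ≠ l' → N.K ≤ linkDist N.G l l'

/-- State of the distributed algorithm: the OPEN, CHECK, MARKED and CLOSED links. -/
structure St (V : Type*) where
  O : Set (V × V)
  H : Set (V × V)
  M : Set (V × V)
  C : Set (V × V)

/-- The OPEN attached links of node `n` (OPEN links whose source is `n`). -/
def openAt {V : Type*} (s : St V) (n : V) : Set (V × V) :=
  {l ∈ s.O | l.1 = n}

/-- `a` selects, at every node `n` having an OPEN attached link, the highest-priced
OPEN attached link `a n` of `n`. -/
def IsSelector {V : Type*} (N : Net V) (s : St V) (a : V → V × V) : Prop :=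
  ∀ n, (openAt s n).Nonempty →
    a n ∈ openAt s n ∧ ∀ l ∈ openAt s n, N.lam l ≤ N.lam (a n)

/-- `R(n)`: the highest-priced OPEN attached links `a n'` of the other nodes `n'` within
`K+1` hops of `n` that have an OPEN attached link. -/
def Rset {V : Type*} (N : Net V) (s : St V) (a : V → V × V) (n : V) : Set (V × V) :=
  {l' | ∃ n', n' ≠ n ∧ N.G.dist n n' ≤ N.K + 1 ∧ (openAt s n').Nonempty ∧ l' = a n'}

/-- Node `n` marks its highest-priced OPEN attached link `a n`: `n` has an OPEN attached
link, and either `R(n) = ∅` or `a n` beats every received price (this disjunction is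
expressed by the universally quantified inequality). -/
def MarkCond {V : Type*} (N : Net V) (s : St V) (a : V → V × V) (n : V) : Prop :=
  (openAt s n).Nonempty ∧ ∀ l' ∈ Rset N s a n, N.lam l' < N.lam (a n)

/-- One round of the distributed greedy algorithm, transforming state `s` into `s'`.
Phase 1: each node `n` with an OPEN attached link either marks `a n` and closes its other
OPEN attached links (when `MarkCond` holds), or moves to CHECK each OPEN attached link
that is interfered with by a strictly higher-priced received link, the rest staying OPEN.
Phase 2: the marked links are added to the MARKED set; every CHECK link interfering with
some MARKED link is closed; then at each node the highest-priced attached link still in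
CHECK (if any) becomes OPEN again. -/
def Step {V : Type*} (N : Net V) (s s' : St V) : Prop :=
  ∃ a : V → V × V, IsSelector N s a ∧
    (let newMarked : Set (V × V) := {l | ∃ n, MarkCond N s a n ∧ l = a n}
     let closed1 : Set (V × V) := {l ∈ s.O | MarkCond N s a l.1 ∧ l ≠ a l.1}
     let newCheck : Set (V × V) :=
       {l ∈ s.O | ¬ MarkCond N s a l.1 ∧
         ∃ l' ∈ Rset N s a l.1, N.lam l < N.lam l' ∧ linkDist N.G l l' < N.K}
     let M' : Set (V × V) := s.M ∪ newMarked
     let pool : Set (V × V) := s.H ∪ newCheck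
     let closed2 : Set (V × V) := {l ∈ pool | ∃ j ∈ M', linkDist N.G l j < N.K}
     let rem : Set (V × V) := pool \ closed2
     let reopened : Set (V × V) := {l ∈ rem | ∀ l' ∈ rem, l'.1 = l.1 → N.lam l' ≤ N.lam l}
     s'.O = (s.O \ (newMarked ∪ closed1 ∪ newCheck)) ∪ reopened ∧
     s'.H = rem \ reopened ∧
     s'.M = M' ∧
     s'.C = s.C ∪ closed1 ∪ closed2)

/-- A trajectory of the distributed greedy algorithm, rounds indexed from `1`:
initially every link of `L` is OPEN, and each round `m ≥ 1` performs one `Step`. -/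
def IsTrajectory {V : Type*} (N : Net V) (O H M C : ℕ → Set (V × V)) : Prop :=
  O 1 = N.L ∧ H 1 = ∅ ∧ M 1 = ∅ ∧ C 1 = ∅ ∧
    ∀ m, 1 ≤ m → Step N ⟨O m, H m, M m, C m⟩ ⟨O (m+1), H (m+1), M (m+1), C (m+1)⟩

/-- Process a list of links in order, starting from `W`, adding a link whenever the
result is still a `K`-valid matching.  Applied to the listing of `L` in strictly
decreasing order of price, this computes the centralized greedy schedule `L_C`. -/
noncomputable def greedyList {V : Type*} (N : Net V) :
    List (V × V) → Set (V × V) → Set (V × V)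
  | [], W => W
  | l :: ls, W => greedyList N ls (if KValid N (insert l W) then insert l W else W)


/-!
While some link is OPEN, the highest-priced OPEN link beats every price its source receives,
so it is MARKED; since it interferes with itself (`K ≥ 1`) it cannot stay in CHECK either, so it
leaves OPEN ∪ CHECK for good. Otherwise OPEN ∪ CHECK never grows, and a nonempty CHECK set
always gives back an OPEN link (the best remaining CHECK link of its node is reopened). Hence
OPEN ∪ CHECK, starting as `L`, shrinks strictly until it is empty, which takes at most `|L|`
rounds.
-/

theorem linkDist_self {V : Type*} (G : SimpleGraph V) (l : V × V) : linkDist G l l = 0 := by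
  simp [linkDist]

theorem Set.exists_le_ncard_eq_empty_of_ssubset {α : Type*} {A : ℕ → Set α}
    (hfin : (A 0).Finite) (hA : ∀ m, (A m).Nonempty → A (m + 1) ⊂ A m) :
    ∃ t ≤ (A 0).ncard, A t = ∅ := by
  by_contra! hne
  have hbound : ∀ m ≤ (A 0).ncard, A m ⊆ A 0 ∧ (A m).ncard + m ≤ (A 0).ncard := by
    intro m
    induction m with
    | zero => simp
    | succ m ih =>
      intro hm
      obtain ⟨hsub, hcard⟩ := ih (by omega)
      have hss := hA m (hne m (by omega))
      have := Set.ncard_lt_ncard hss (hfin.subset hsub)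
      exact ⟨hss.subset.trans hsub, by omega⟩
  obtain ⟨hsub, hcard⟩ := hbound _ le_rfl
  exact (hne _ le_rfl).ne_empty ((Set.ncard_eq_zero (hfin.subset hsub)).1 (by omega))

theorem Set.Finite.nonempty_max_image_fst_eq {α β : Type*} {R : Set (α × β)} (hR : R.Finite)
    (f : α × β → ℝ) (hne : R.Nonempty) :
    {m ∈ R | ∀ l ∈ R, l.1 = m.1 → f l ≤ f m}.Nonempty := by
  obtain ⟨l, hl⟩ := hne
  obtain ⟨m, ⟨hmR, hm⟩, hmax⟩ :=
    Set.exists_max_image {x ∈ R | x.1 = l.1} f (hR.subset fun _ hx => hx.1) ⟨l, hl, rfl⟩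
  exact ⟨m, hmR, fun l' hl' h => hmax l' ⟨hl', h.trans hm⟩⟩

section

variable {V : Type*} {N : Net V} {s s' : St V}

theorem IsSelector.apply_eq_and_markCond_of_max {a : V → V × V} (hsel : IsSelector N s a)
    (hOL : s.O ⊆ N.L) {b : V × V} (hb : b ∈ s.O) (hbmax : ∀ l ∈ s.O, N.lam l ≤ N.lam b) :
    a b.1 = b ∧ MarkCond N s a b.1 := by
  have hopen : (openAt s b.1).Nonempty := ⟨b, hb, rfl⟩
  obtain ⟨⟨haO, -⟩, hale⟩ := hsel _ hopen
  have hab : a b.1 = b := by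
    by_contra hne
    exact N.distinct _ (hOL haO) _ (hOL hb) hne (le_antisymm (hbmax _ haO) (hale b ⟨hb, rfl⟩))
  refine ⟨hab, hopen, ?_⟩
  rintro _ ⟨n', hn', -, hopen', rfl⟩
  obtain ⟨⟨ha'O, ha'src⟩, -⟩ := hsel n' hopen'
  rw [hab]
  refine (hbmax _ ha'O).lt_of_ne (N.distinct _ (hOL ha'O) _ (hOL hb) ?_)
  rintro rfl
  exact hn' ha'src.symm

namespace Step

theorem active_subset (h : Step N s s') : s'.O ∪ s'.H ⊆ s.O ∪ s.H := by
  obtain ⟨a, -, hO, hH, -⟩ := h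
  rw [hO, hH]
  rintro l ((⟨hl, -⟩ | ⟨⟨hl | hl, -⟩, -⟩) | ⟨⟨hl | hl, -⟩, -⟩)
  exacts [Or.inl hl, Or.inr hl, Or.inl hl.1, Or.inr hl, Or.inl hl.1]

theorem nonempty_O_of_nonempty_H (h : Step N s s') (hfin : (s.O ∪ s.H).Finite)
    (hH' : s'.H.Nonempty) : s'.O.Nonempty := by
  obtain ⟨a, -, hO, hH, -⟩ := h
  obtain ⟨l, hl⟩ := hH'
  rw [hH] at hl
  rw [hO]
  refine ((hfin.subset ?_).nonempty_max_image_fst_eq N.lam ⟨l, hl.1⟩).mono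
    Set.subset_union_right
  rintro x ⟨hx | hx, -⟩
  exacts [Or.inr hx, Or.inl hx.1]

theorem exists_mem_O_not_mem_active (h : Step N s s') (hOL : s.O ⊆ N.L) (hne : s.O.Nonempty) :
    ∃ b ∈ s.O, b ∉ s'.O ∪ s'.H := by
  obtain ⟨a, hsel, hO, hH, -⟩ := h
  obtain ⟨b, hb, hbmax⟩ := Set.exists_max_image s.O N.lam (N.Lfin.subset hOL) hne
  obtain ⟨hab, hmark⟩ := hsel.apply_eq_and_markCond_of_max hOL hb hbmax
  have hmarked : ∃ n, MarkCond N s a n ∧ b = a n := ⟨b.1, hmark, hab.symm⟩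
  have hself : linkDist N.G b b < N.K := by rw [linkDist_self]; exact N.hK
  refine ⟨b, hb, ?_⟩
  rw [hO, hH]
  rintro ((⟨-, hkept⟩ | ⟨⟨hpool, hopen⟩, -⟩) | ⟨⟨hpool, hopen⟩, -⟩)
  · exact hkept (Or.inl (Or.inl hmarked))
  all_goals exact hopen ⟨hpool, b, Or.inr hmarked, hself⟩

end Step

namespace IsTrajectory

variable {O H M C : ℕ → Set (V × V)}

theorem active_one (htraj : IsTrajectory N O H M C) : O 1 ∪ H 1 = N.L := by
  rw [htraj.1, htraj.2.1, Set.union_empty]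

theorem step (htraj : IsTrajectory N O H M C) (m : ℕ) :
    Step N ⟨O (m + 1), H (m + 1), M (m + 1), C (m + 1)⟩
      ⟨O (m + 2), H (m + 2), M (m + 2), C (m + 2)⟩ :=
  htraj.2.2.2.2 (m + 1) (by omega)

theorem active_subset_L (htraj : IsTrajectory N O H M C) (m : ℕ) :
    O (m + 1) ∪ H (m + 1) ⊆ N.L := by
  induction m with
  | zero => exact htraj.active_one.subset
  | succ m ih => exact (htraj.step m).active_subset.trans ih

theorem nonempty_O_of_nonempty_active (htraj : IsTrajectory N O H M C) {m : ℕ}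
    (hne : (O (m + 1) ∪ H (m + 1)).Nonempty) : (O (m + 1)).Nonempty := by
  obtain ⟨l, hlO | hlH⟩ := hne
  · exact ⟨l, hlO⟩
  cases m with
  | zero => simp [htraj.2.1] at hlH
  | succ m =>
    exact (htraj.step m).nonempty_O_of_nonempty_H (N.Lfin.subset (htraj.active_subset_L m))
      ⟨l, hlH⟩

theorem active_ssubset (htraj : IsTrajectory N O H M C) {m : ℕ}
    (hne : (O (m + 1) ∪ H (m + 1)).Nonempty) :
    O (m + 2) ∪ H (m + 2) ⊂ O (m + 1) ∪ H (m + 1) := by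
  obtain ⟨b, hb, hbnot⟩ := (htraj.step m).exists_mem_O_not_mem_active
    (Set.subset_union_left.trans (htraj.active_subset_L m))
    (htraj.nonempty_O_of_nonempty_active hne)
  exact (Set.ssubset_iff_of_subset (htraj.step m).active_subset).2 ⟨b, Or.inl hb, hbnot⟩

end IsTrajectory

end

theorem stmt0_terminates_in_finite_time_general {V : Type*} (N : Net V)
    (O H M C : ℕ → Set (V × V)) (htraj : IsTrajectory N O H M C) :
    ∃ t ≤ N.L.ncard, O (t + 1) ∪ H (t + 1) = ∅ := by
  have hfin : (O 1 ∪ H 1).Finite := htraj.active_one ▸ N.Lfin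
  simpa only [zero_add, htraj.active_one] using
    Set.exists_le_ncard_eq_empty_of_ssubset (A := fun m => O (m + 1) ∪ H (m + 1)) hfin
      fun _ => htraj.active_ssubset

/-- the distributed greedy algorithm terminates: there is a round
`t ≤ |L|` with `O (t+1) ∪ H (t+1) = ∅`. -/
theorem stmt0_terminates_in_finite_time {V : Type*} [Fintype V] (N : Net V)
    (O H M C : ℕ → Set (V × V)) (htraj : IsTrajectory N O H M C) :
    ∃ t ≤ N.L.ncard, O (t + 1) ∪ H (t + 1) = ∅ :=
  stmt0_terminates_in_finite_time_general N O H M C htraj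
end

section
/- For every round m, if O_m ≠ ∅ then the highest-priced link of O_m belongs to M_{m+1}: the globally maximum-priced OPEN link gets MARKED in that round. -/
open Classical

/-! The globally highest-priced OPEN link `l` is in particular the highest-priced OPEN attached
link of its source, so it is the link `a l.1` that its source proposes, and since prices of links
of `L` are distinct it strictly beats every proposal `a n'` of another node. Hence the source of
`l` marks it. Distinctness applies because OPEN links always lie in `L`. -/

section

variable {V : Type*} {N : Net V}

theorem Net.lam_injOn (N : Net V) : Set.InjOn N.lam N.L := fun l hl l' hl' heq =>
  by_contra fun hne => N.distinct l hl l' hl' hne heq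

theorem Net.lam_lt_of_forall_le {S : Set (V × V)} (hS : S ⊆ N.L) {l l' : V × V}
    (hmax : ∀ x ∈ S, N.lam x ≤ N.lam l) (hl : l ∈ S) (hl' : l' ∈ S) (hne : l' ≠ l) :
    N.lam l' < N.lam l :=
  (hmax l' hl').lt_of_ne fun h => hne (N.lam_injOn (hS hl') (hS hl) h)

section Selector

variable {s : St V} {a : V → V × V} {l : V × V}

theorem IsSelector.eq_of_forall_le (hsel : IsSelector N s a) (hO : s.O ⊆ N.L) (hl : l ∈ s.O)
    (hmax : ∀ x ∈ s.O, N.lam x ≤ N.lam l) : a l.1 = l := by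
  obtain ⟨⟨haO, -⟩, hale⟩ := hsel l.1 ⟨l, hl, rfl⟩
  by_contra hne
  exact (hale l ⟨hl, rfl⟩).not_gt (N.lam_lt_of_forall_le hO hmax hl haO hne)

theorem IsSelector.markCond_of_forall_le (hsel : IsSelector N s a) (hO : s.O ⊆ N.L)
    (hl : l ∈ s.O) (hmax : ∀ x ∈ s.O, N.lam x ≤ N.lam l) : MarkCond N s a l.1 := by
  refine ⟨⟨l, hl, rfl⟩, ?_⟩
  rintro _ ⟨n', hn', -, hopen, rfl⟩
  obtain ⟨⟨haO, hsrc⟩, -⟩ := hsel n' hopen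
  rw [hsel.eq_of_forall_le hO hl hmax]
  exact N.lam_lt_of_forall_le hO hmax hl haO fun h => hn' (hsrc ▸ h ▸ rfl)

end Selector

section Step

variable {s s' : St V}

theorem Step.O_union_H_subset (h : Step N s s') : s'.O ∪ s'.H ⊆ s.O ∪ s.H := by
  obtain ⟨a, -, hO, hH, -, -⟩ := h
  rw [hO, hH]
  rintro x ((⟨hx, -⟩ | ⟨⟨hx | ⟨hx, -⟩, -⟩, -⟩) | ⟨⟨hx | ⟨hx, -⟩, -⟩, -⟩) <;> simp [hx]

theorem Step.mem_M_of_forall_le (h : Step N s s') (hO : s.O ⊆ N.L) {l : V × V} (hl : l ∈ s.O)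
    (hmax : ∀ x ∈ s.O, N.lam x ≤ N.lam l) : l ∈ s'.M := by
  obtain ⟨a, hsel, -, -, hM, -⟩ := h
  rw [hM]
  exact Or.inr ⟨l.1, hsel.markCond_of_forall_le hO hl hmax,
    (hsel.eq_of_forall_le hO hl hmax).symm⟩

end Step

theorem IsTrajectory.O_union_H_subset {O H M C : ℕ → Set (V × V)}
    (htraj : IsTrajectory N O H M C) {m : ℕ} (hm : 1 ≤ m) : O m ∪ H m ⊆ N.L := by
  obtain ⟨hO1, hH1, -, -, hstep⟩ := htraj
  induction m, hm using Nat.le_induction with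
  | base => simp [hO1, hH1]
  | succ m hm ih => exact (hstep m hm).O_union_H_subset.trans ih

end

theorem stmt1_max_open_gets_marked_general {V : Type*} (N : Net V)
    (O H M C : ℕ → Set (V × V)) (htraj : IsTrajectory N O H M C) :
    ∀ m, 1 ≤ m → (O m).Nonempty →
      ∀ l ∈ O m, (∀ l' ∈ O m, N.lam l' ≤ N.lam l) → l ∈ M (m + 1) := by
  intro m hm _ l hl hmax
  have hO : O m ⊆ N.L := Set.subset_union_left.trans (htraj.O_union_H_subset hm)
  exact (htraj.2.2.2.2 m hm).mem_M_of_forall_le hO hl hmax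

/-- for every round `m`, if `O m ≠ ∅` then the highest-priced link of
`O m` gets MARKED in that round, i.e. belongs to `M (m+1)`. -/
theorem stmt1_max_open_gets_marked {V : Type*} [Fintype V] (N : Net V)
    (O H M C : ℕ → Set (V × V)) (htraj : IsTrajectory N O H M C) :
    ∀ m, 1 ≤ m → (O m).Nonempty →
      ∀ l ∈ O m, (∀ l' ∈ O m, N.lam l' ≤ N.lam l) → l ∈ M (m + 1) :=
  stmt1_max_open_gets_marked_general N O H M C htraj
end

section
/- For every round m and every link i ∈ C_m, there exists a link j ∈ M_m with d(i,j) < K: every CLOSED link interferes with some MARKED link. -/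
/-
A link is closed either in Phase 1, at a node that marks its best OPEN link, which has the
same source and hence link distance 0 < K, or in Phase 2, precisely because it interferes
with a MARKED link. MARKED links are never removed, so the property persists round to round.
-/

open Classical

theorem linkDist_eq_zero_of_fst_eq {V : Type*} (G : SimpleGraph V) {l l' : V × V}
    (h : l.1 = l'.1) : linkDist G l l' = 0 := by
  have : linkDist G l l' ≤ G.dist l.1 l'.1 := (min_le_left _ _).trans (min_le_left _ _)
  rwa [h, SimpleGraph.dist_self, Nat.le_zero] at this

def ClosedInterferesMarked {V : Type*} (N : Net V) (s : St V) : Prop :=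
  ∀ i ∈ s.C, ∃ j ∈ s.M, linkDist N.G i j < N.K

theorem Step.closedInterferesMarked {V : Type*} {N : Net V} {s s' : St V} (hstep : Step N s s')
    (hs : ClosedInterferesMarked N s) : ClosedInterferesMarked N s' := by
  obtain ⟨a, hsel, -, -, hM, hC⟩ := hstep
  intro i hi
  rw [hC] at hi
  rw [hM]
  rcases hi with (hold | ⟨-, hmark, -⟩) | ⟨-, j, hj, hij⟩
  · obtain ⟨j, hj, hij⟩ := hs i hold
    exact ⟨j, Or.inl hj, hij⟩
  · have hsrc : (a i.1).1 = i.1 := (hsel i.1 hmark.1).1.2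
    refine ⟨a i.1, Or.inr ⟨i.1, hmark, rfl⟩, ?_⟩
    rw [linkDist_eq_zero_of_fst_eq N.G hsrc.symm]
    exact N.hK
  · exact ⟨j, hj, hij⟩

theorem stmt5_closed_interferes_with_marked_general {V : Type*} (N : Net V)
    (O H M C : ℕ → Set (V × V)) (htraj : IsTrajectory N O H M C) :
    ∀ m, 1 ≤ m → ∀ i ∈ C m, ∃ j ∈ M m, linkDist N.G i j < N.K := by
  obtain ⟨-, -, -, hC1, hstep⟩ := htraj
  intro m hm
  induction m, hm using Nat.le_induction with
  | base => simp [hC1]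
  | succ m hm ih => exact (hstep m hm).closedInterferesMarked ih

/-- every CLOSED link interferes with some MARKED link:
for every round `m` and `i ∈ C m` there is `j ∈ M m` with `d(i,j) < K`. -/
theorem stmt5_closed_interferes_with_marked {V : Type*} [Fintype V] (N : Net V)
    (O H M C : ℕ → Set (V × V)) (htraj : IsTrajectory N O H M C) :
    ∀ m, 1 ≤ m → ∀ i ∈ C m, ∃ j ∈ M m, linkDist N.G i j < N.K :=
  stmt5_closed_interferes_with_marked_general N O H M C htraj
end

section
/- For every round m, if O_m ∪ H_m ≠ ∅ then the highest-priced link of O_m ∪ H_m belongs to O_m: at the beginning of a round, the globally highest-priced link among links that are neither CLOSED nor MARKED is not in CHECK state. -/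
open Classical

/-!
A link that is still in CHECK after a round was not reopened, so its node holds a strictly
higher-priced link that survived Phase 2 and is therefore OPEN or CHECK again. Hence a CHECK
link is never the highest-priced link of `O m ∪ H m`; in round `1` there are no CHECK links.
-/

theorem Step.exists_lam_lt_of_mem_H {V : Type*} {N : Net V} {s s' : St V} (hstep : Step N s s')
    {l : V × V} (hl : l ∈ s'.H) : ∃ l' ∈ s'.O ∪ s'.H, N.lam l < N.lam l' := by
  obtain ⟨a, -, hO, hH, -, -⟩ := hstep
  rw [hH] at hl
  obtain ⟨hl_rem, hl_not_reopened⟩ := hl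
  obtain ⟨l', hl'_rem, -, hlt⟩ : ∃ l' ∈ _, l'.1 = l.1 ∧ N.lam l < N.lam l' := by
    by_contra! hmax
    exact hl_not_reopened ⟨hl_rem, hmax⟩
  refine ⟨l', ?_, hlt⟩
  rw [hO, hH]
  exact (Classical.em _).elim (fun hre => Or.inl (Or.inr hre)) (fun hre => Or.inr ⟨hl'_rem, hre⟩)

theorem IsTrajectory.exists_lam_lt_of_mem_H {V : Type*} {N : Net V}
    {O H M C : ℕ → Set (V × V)} (htraj : IsTrajectory N O H M C) {m : ℕ} (hm : 1 ≤ m)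
    {l : V × V} (hl : l ∈ H m) : ∃ l' ∈ O m ∪ H m, N.lam l < N.lam l' := by
  obtain ⟨-, hH₁, -, -, hstep⟩ := htraj
  obtain _ | _ | k := m
  · omega
  · simp [hH₁] at hl
  · exact (hstep (k + 1) (Nat.le_add_left 1 k)).exists_lam_lt_of_mem_H hl

theorem stmt7_max_non_closed_non_marked_is_open_general {V : Type*} (N : Net V)
    (O H M C : ℕ → Set (V × V)) (htraj : IsTrajectory N O H M C) :
    ∀ m, 1 ≤ m → (O m ∪ H m).Nonempty →
      ∀ l ∈ O m ∪ H m, (∀ l' ∈ O m ∪ H m, N.lam l' ≤ N.lam l) → l ∈ O m := by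
  rintro m hm - l hl hmax
  refine hl.resolve_right fun hlH => ?_
  obtain ⟨l', hl', hlt⟩ := htraj.exists_lam_lt_of_mem_H hm hlH
  exact (hmax l' hl').not_gt hlt

/-- at the beginning of a round, the globally highest-priced link among
links that are neither CLOSED nor MARKED (i.e. the highest-priced link of `O m ∪ H m`)
is OPEN, not in CHECK state. -/
theorem stmt7_max_non_closed_non_marked_is_open {V : Type*} [Fintype V] (N : Net V)
    (O H M C : ℕ → Set (V × V)) (htraj : IsTrajectory N O H M C) :
    ∀ m, 1 ≤ m → (O m ∪ H m).Nonempty →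
      ∀ l ∈ O m ∪ H m, (∀ l' ∈ O m ∪ H m, N.lam l' ≤ N.lam l) → l ∈ O m :=
  stmt7_max_non_closed_non_marked_is_open_general N O H M C htraj
end

section
/- For every round m, the set M_m of MARKED links is a K-valid matching: any two distinct MARKED links l, l' satisfy d(l,l') ≥ K. -/
open Classical

/-! Every OPEN link stays at link distance `≥ K` from every MARKED link; this invariant gives the
claim, since the links marked in a round are OPEN links. Two interfering links have sources
within `K + 1` hops of each other, so of two interfering links marked in the same round each
would have to outprice the other. An OPEN link `l` interfering with a newly marked `a n`, at a
node `l.1` that does not mark, receives the higher price of `a n ∈ R(l.1)` and is moved to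
CHECK; CHECK links interfering with a MARKED link are closed before any of them is reopened. -/

open SimpleGraph

theorem linkDist_comm {V : Type*} (G : SimpleGraph V) (l l' : V × V) :
    linkDist G l l' = linkDist G l' l := by
  unfold linkDist
  rw [dist_comm (u := l.1), dist_comm (u := l.1), dist_comm (u := l.2), dist_comm (u := l.2)]
  omega

namespace SimpleGraph

variable {V : Type*} {G : SimpleGraph V}

theorem Connected.dist_fst_le_linkDist_add_two (hG : G.Connected) {l l' : V × V}
    (hl : G.Adj l.1 l.2) (hl' : G.Adj l'.1 l'.2) :
    G.dist l.1 l'.1 ≤ linkDist G l l' + 2 := by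
  have h₁ : G.dist l.1 l.2 = 1 := dist_eq_one_iff_adj.mpr hl
  have h₂ : G.dist l'.2 l'.1 = 1 := dist_eq_one_iff_adj.mpr hl'.symm
  have t₁ : G.dist l.1 l'.1 ≤ G.dist l.1 l'.2 + G.dist l'.2 l'.1 := hG.dist_triangle
  have t₂ : G.dist l.1 l'.1 ≤ G.dist l.1 l.2 + G.dist l.2 l'.1 := hG.dist_triangle
  have t₃ : G.dist l.2 l'.1 ≤ G.dist l.2 l'.2 + G.dist l'.2 l'.1 := hG.dist_triangle
  unfold linkDist
  omega

end SimpleGraph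

section

variable {V : Type*} {N : Net V}

theorem KValid.union {A B : Set (V × V)} (hA : KValid N A) (hB : KValid N B)
    (hBA : ∀ l ∈ B, ∀ j ∈ A, N.K ≤ linkDist N.G l j) : KValid N (A ∪ B) := by
  rintro l (hl | hl) l' (hl' | hl') hne
  · exact hA l hl l' hl' hne
  · exact linkDist_comm N.G l l' ▸ hBA l' hl' l hl
  · exact hBA l hl l' hl'
  · exact hB l hl l' hl' hne

theorem mem_Rset_of_linkDist_lt {s : St V} (a : V → V × V) (hO : s.O ⊆ N.L) {n n' : V}
    {l l' : V × V} (hl : l ∈ openAt s n) (hl' : l' ∈ openAt s n') (hne : n' ≠ n)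
    (hlt : linkDist N.G l l' < N.K) : a n' ∈ Rset N s a n := by
  have hdist := N.conn.dist_fst_le_linkDist_add_two (N.adj l (hO hl.1)) (N.adj l' (hO hl'.1))
  rw [hl.2, hl'.2] at hdist
  exact ⟨n', hne, by omega, ⟨l', hl'⟩, rfl⟩

namespace IsSelector

variable {s : St V} {a : V → V × V}

theorem le_linkDist_of_markCond (ha : IsSelector N s a) (hO : s.O ⊆ N.L) {n n' : V}
    (hn : MarkCond N s a n) (hn' : MarkCond N s a n') (hne : a n ≠ a n') :
    N.K ≤ linkDist N.G (a n) (a n') := by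
  by_contra! hlt
  have hnn' : n' ≠ n := fun h => hne (by rw [h])
  have han := (ha n hn.1).1
  have han' := (ha n' hn'.1).1
  have h₁ := hn.2 _ (mem_Rset_of_linkDist_lt a hO han han' hnn' hlt)
  have h₂ := hn'.2 _
    (mem_Rset_of_linkDist_lt a hO han' han hnn'.symm (linkDist_comm N.G _ _ ▸ hlt))
  linarith

/-- The conclusion is Phase 1's condition for moving `l` to CHECK. -/
theorem checks_of_linkDist_lt (ha : IsSelector N s a) (hO : s.O ⊆ N.L) {l : V × V} {n : V}
    (hl : l ∈ s.O) (hn : MarkCond N s a n) (hlt : linkDist N.G l (a n) < N.K)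
    (hl₁ : ¬ MarkCond N s a l.1) :
    ∃ l' ∈ Rset N s a l.1, N.lam l < N.lam l' ∧ linkDist N.G l l' < N.K := by
  have han := (ha n hn.1).1
  have hl' : l ∈ openAt s l.1 := ⟨hl, rfl⟩
  have hne : n ≠ l.1 := fun h => hl₁ (h ▸ hn)
  have hRl := mem_Rset_of_linkDist_lt a hO han hl' hne.symm (linkDist_comm N.G _ _ ▸ hlt)
  have hRn := mem_Rset_of_linkDist_lt a hO hl' han hne hlt
  have hle : N.lam l ≤ N.lam (a l.1) := (ha l.1 ⟨l, hl'⟩).2 l hl'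
  exact ⟨a n, hRn, hle.trans_lt (hn.2 _ hRl), hlt⟩

end IsSelector

structure MarkingInvariant (N : Net V) (s : St V) : Prop where
  open_subset : s.O ⊆ N.L
  check_subset : s.H ⊆ N.L
  kValid_marked : KValid N s.M
  le_linkDist_open_marked : ∀ l ∈ s.O, ∀ j ∈ s.M, N.K ≤ linkDist N.G l j

theorem MarkingInvariant.step {s s' : St V} (hs : MarkingInvariant N s) (hstep : Step N s s') :
    MarkingInvariant N s' := by
  obtain ⟨a, ha, hO', hH', hM', -⟩ := hstep
  have hnewM : ∀ l ∈ {l | ∃ n, MarkCond N s a n ∧ l = a n}, l ∈ s.O := by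
    rintro _ ⟨n, hn, rfl⟩
    exact (ha n hn.1).1.1
  have hnewM_valid : KValid N {l | ∃ n, MarkCond N s a n ∧ l = a n} := by
    rintro _ ⟨n, hn, rfl⟩ _ ⟨n', hn', rfl⟩ hne
    exact ha.le_linkDist_of_markCond hs.open_subset hn hn' hne
  have hpool : ∀ {l : V × V} {P : V × V → Prop},
      l ∈ s.H ∪ {l ∈ s.O | P l} → l ∈ N.L := by
    rintro l P (hl | hl)
    exacts [hs.check_subset hl, hs.open_subset hl.1]
  refine ⟨?_, ?_, ?_, ?_⟩
  · rw [hO']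
    rintro l (hl | hl)
    exacts [hs.open_subset hl.1, hpool hl.1.1]
  · rw [hH']
    exact fun l hl => hpool hl.1.1
  · rw [hM']
    exact hs.kValid_marked.union hnewM_valid fun l hl j hj =>
      hs.le_linkDist_open_marked l (hnewM l hl) j hj
  · rw [hO', hM']
    rintro l (⟨hlO, hl_kept⟩ | hl_reopened) j hj <;> by_contra! hlt
    · obtain hj | ⟨n, hn, rfl⟩ := hj
      · exact (hs.le_linkDist_open_marked l hlO j hj).not_gt hlt
      by_cases hl₁ : MarkCond N s a l.1
      · by_cases heq : l = a l.1
        · exact hl_kept (.inl (.inl ⟨l.1, hl₁, heq⟩))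
        · exact hl_kept (.inl (.inr ⟨hlO, hl₁, heq⟩))
      · exact hl_kept
          (.inr ⟨hlO, hl₁, ha.checks_of_linkDist_lt hs.open_subset hlO hn hlt hl₁⟩)
    · exact hl_reopened.1.2 ⟨hl_reopened.1.1, j, hj, hlt⟩

end

theorem stmt9_marked_is_K_valid_general {V : Type*} (N : Net V)
    (O H M C : ℕ → Set (V × V)) (htraj : IsTrajectory N O H M C) :
    ∀ m, 1 ≤ m → KValid N (M m) := by
  obtain ⟨hO₁, hH₁, hM₁, -, hstep⟩ := htraj
  intro m hm
  suffices MarkingInvariant N ⟨O m, H m, M m, C m⟩ from this.kValid_marked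
  induction m, hm using Nat.le_induction with
  | base =>
    exact ⟨hO₁.le, by simp [hH₁], by simp [KValid, hM₁], by simp [hM₁]⟩
  | succ m hm ih => exact ih.step (hstep m hm)

/-- for every round `m`, the set `M m` of MARKED links is a `K`-valid
matching: distinct MARKED links are at link distance `≥ K`. -/
theorem stmt9_marked_is_K_valid {V : Type*} [Fintype V] (N : Net V)
    (O H M C : ℕ → Set (V × V)) (htraj : IsTrajectory N O H M C) :
    ∀ m, 1 ≤ m → KValid N (M m) :=
  stmt9_marked_is_K_valid_general N O H M C htraj
end

section
/- If L ≠ ∅ and l_1 is the globally highest-priced link of L, then l_1 ∈ L_C and l_1 ∈ M_2: the globally maximum-priced link is chosen by the centralized greedy algorithm and is MARKED by the distributed greedy algorithm after the first round. -/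
open Classical

/-! In a list sorted by strictly decreasing price the top-priced link comes first, and a single
link is always a `K`-valid matching, so the centralized greedy takes it and never removes
it. In any round where it is the top-priced OPEN link, it is the selected link at its
source, and every received price belongs to a different link of `L`, hence is strictly
lower; so its source marks it. -/

theorem List.eq_cons_of_pairwise_gt_of_le {α β : Type*} [LinearOrder β] (f : α → β)
    {xs : List α} (hsort : xs.Pairwise (fun a b => f b < f a)) {x : α} (hx : x ∈ xs)
    (hmax : ∀ y ∈ xs, f y ≤ f x) : ∃ ys, xs = x :: ys := by
  cases xs with
  | nil => simp at hx
  | cons y ys =>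
    refine ⟨ys, ?_⟩
    rcases List.mem_cons.1 hx with rfl | hx_tail
    · rfl
    · exact absurd (hmax y List.mem_cons_self)
        (not_le.2 ((List.pairwise_cons.1 hsort).1 x hx_tail))

section
variable {V : Type*} (N : Net V)

theorem KValid.of_subsingleton {W : Set (V × V)} (hW : W.Subsingleton) : KValid N W :=
  fun _ hl _ hl' hne => absurd (hW hl hl') hne

theorem subset_greedyList (ls : List (V × V)) (W : Set (V × V)) : W ⊆ greedyList N ls W := by
  induction ls generalizing W with
  | nil => exact subset_rfl
  | cons l ls ih =>
    rw [greedyList]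
    split
    · exact (Set.subset_insert l W).trans (ih _)
    · exact ih W

theorem mem_greedyList_cons_empty (l : V × V) (ls : List (V × V)) :
    l ∈ greedyList N (l :: ls) ∅ := by
  have hvalid : KValid N (insert l ∅) :=
    KValid.of_subsingleton N (Set.singleton_def l ▸ Set.subsingleton_singleton)
  rw [greedyList, if_pos hvalid]
  exact subset_greedyList N ls _ (Set.mem_insert l ∅)

theorem Net.lam_lt_of_le {l l' : V × V} (hl : l ∈ N.L) (hl' : l' ∈ N.L) (hne : l' ≠ l)
    (hle : N.lam l' ≤ N.lam l) : N.lam l' < N.lam l :=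
  hle.lt_of_ne (N.distinct l' hl' l hl hne)

variable {N} {s : St V} {a : V → V × V} {l : V × V}

theorem IsSelector.eq_of_max (hsel : IsSelector N s a) (hOL : s.O ⊆ N.L) (hl : l ∈ s.O)
    (hmax : ∀ l' ∈ s.O, N.lam l' ≤ N.lam l) : a l.1 = l := by
  have hopen : l ∈ openAt s l.1 := ⟨hl, rfl⟩
  obtain ⟨⟨ha_open, -⟩, ha_max⟩ := hsel l.1 ⟨l, hopen⟩
  by_contra hne
  exact (N.lam_lt_of_le (hOL hl) (hOL ha_open) hne (hmax _ ha_open)).not_ge (ha_max l hopen)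

theorem IsSelector.markCond_of_max (hsel : IsSelector N s a) (hOL : s.O ⊆ N.L)
    (hl : l ∈ s.O) (hmax : ∀ l' ∈ s.O, N.lam l' ≤ N.lam l) : MarkCond N s a l.1 := by
  refine ⟨⟨l, hl, rfl⟩, ?_⟩
  rintro _ ⟨n', hn', -, hopen', rfl⟩
  obtain ⟨⟨ha'_open, ha'_src⟩, -⟩ := hsel n' hopen'
  have hne : a n' ≠ l := fun h => hn' (ha'_src.symm.trans (congrArg Prod.fst h))
  rw [hsel.eq_of_max hOL hl hmax]
  exact N.lam_lt_of_le (hOL hl) (hOL ha'_open) hne (hmax _ ha'_open)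

theorem Step.mem_M_of_max {s' : St V} (hstep : Step N s s') (hOL : s.O ⊆ N.L)
    (hl : l ∈ s.O) (hmax : ∀ l' ∈ s.O, N.lam l' ≤ N.lam l) : l ∈ s'.M := by
  obtain ⟨a, hsel, -, -, hM, -⟩ := hstep
  rw [hM]
  exact Or.inr ⟨l.1, hsel.markCond_of_max hOL hl hmax, (hsel.eq_of_max hOL hl hmax).symm⟩

end

theorem stmt15_global_max_chosen_and_marked_general {V : Type*} (N : Net V)
    (O H M C : ℕ → Set (V × V)) (htraj : IsTrajectory N O H M C)
    (lst : List (V × V)) (hmem : ∀ l, l ∈ lst ↔ l ∈ N.L)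
    (hsort : lst.Pairwise (fun a b => N.lam b < N.lam a))
    (l₁ : V × V) (hl₁ : l₁ ∈ N.L)
    (hmax : ∀ l ∈ N.L, N.lam l ≤ N.lam l₁) :
    l₁ ∈ greedyList N lst ∅ ∧ l₁ ∈ M 2 := by
  obtain ⟨hO1, -, -, -, hstep⟩ := htraj
  obtain ⟨rest, rfl⟩ := List.eq_cons_of_pairwise_gt_of_le N.lam hsort ((hmem l₁).2 hl₁)
    fun l hl => hmax l ((hmem l).1 hl)
  refine ⟨mem_greedyList_cons_empty N l₁ rest, ?_⟩
  have hstep₁ : Step N ⟨N.L, H 1, M 1, C 1⟩ ⟨O 2, H 2, M 2, C 2⟩ := hO1 ▸ hstep 1 le_rfl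
  exact hstep₁.mem_M_of_max subset_rfl hl₁ hmax

/-- if `L ≠ ∅` and `l₁` is the globally highest-priced link of `L`, then
`l₁` is chosen by the centralized greedy algorithm and is MARKED by the distributed
greedy algorithm after the first round: `l₁ ∈ L_C` and `l₁ ∈ M 2`. -/
theorem stmt15_global_max_chosen_and_marked {V : Type*} [Fintype V] (N : Net V)
    (O H M C : ℕ → Set (V × V)) (htraj : IsTrajectory N O H M C)
    (lst : List (V × V)) (hmem : ∀ l, l ∈ lst ↔ l ∈ N.L)
    (hsort : lst.Pairwise (fun a b => N.lam b < N.lam a))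
    (hL : N.L.Nonempty) (l₁ : V × V) (hl₁ : l₁ ∈ N.L)
    (hmax : ∀ l ∈ N.L, N.lam l ≤ N.lam l₁) :
    l₁ ∈ greedyList N lst ∅ ∧ l₁ ∈ M 2 :=
  stmt15_global_max_chosen_and_marked_general N O H M C htraj lst hmem hsort l₁ hl₁ hmax
end
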